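/- Let λ_1, λ_2 ∈ ℂ² with ⟨12⟩ ≠ 0 and let Q be the (n−2)×(n−2) symmetric tridiagonal matrix of the previous statements (indices î, ĵ ∈ {3,…,n}, all ⟨i,i+1⟩ ≠ 0). Define Q⁻¹_{p̂ĵ} = −⟨1ĵ⟩⟨2p̂⟩/⟨12⟩ for ĵ ≥ p̂ and Q⁻¹_{p̂ĵ} = −⟨1p̂⟩⟨2ĵ⟩/⟨12⟩ for ĵ ≤ p̂. Then Σ_{p̂=3}^{n} Q_{îp̂} Q⁻¹_{p̂ĵ} = δ_{îĵ}, i.e. this matrix is the inverse of Q. -/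

import Mathlib

/-- The angle bracket `⟨ij⟩ = λ_i^1 λ_j^2 - λ_i^2 λ_j^1`, for spinors indexed cyclically. -/
def ang {n : ℕ} (lam : ZMod n → Fin 2 → ℂ) (i j : ZMod n) : ℂ :=
  lam i 0 * lam j 1 - lam i 1 * lam j 0

/-- The label (in `ZMod n`) of the `k`-th row/column of the matrix `Q`, whose rows and columns
are indexed by particle labels `3, …, n`. -/
def lbl {n : ℕ} (k : Fin (n - 2)) : ZMod n := ((k : ℕ) + 3 : ℕ)

/-- The `(n-2) × (n-2)` symmetric tridiagonal matrix `Q` with rows/columns indexed by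
`î = 3, …, n`: `Q_{îp̂} = ⟨î+1,î−1⟩/(⟨î−1,î⟩⟨î,î+1⟩)` for `p̂ = î`, `1/⟨î,î+1⟩` for `p̂ = î+1`,
`1/⟨î−1,î⟩` for `p̂ = î−1`, and `0` otherwise. -/
noncomputable def Qmat {n : ℕ} (lam : ZMod n → Fin 2 → ℂ) :
    Matrix (Fin (n - 2)) (Fin (n - 2)) ℂ :=
  Matrix.of fun i j =>
    if i = j then
      ang lam (lbl i + 1) (lbl i - 1) / (ang lam (lbl i - 1) (lbl i) * ang lam (lbl i) (lbl i + 1))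
    else if (j : ℕ) = (i : ℕ) + 1 then 1 / ang lam (lbl i) (lbl i + 1)
    else if (i : ℕ) = (j : ℕ) + 1 then 1 / ang lam (lbl j) (lbl j + 1)
    else 0

/-- The claimed inverse: `Q⁻¹_{p̂ĵ} = −⟨1ĵ⟩⟨2p̂⟩/⟨12⟩` for `ĵ ≥ p̂` and
`Q⁻¹_{p̂ĵ} = −⟨1p̂⟩⟨2ĵ⟩/⟨12⟩` for `ĵ ≤ p̂`. -/
noncomputable def Qinv {n : ℕ} (lam : ZMod n → Fin 2 → ℂ) :
    Matrix (Fin (n - 2)) (Fin (n - 2)) ℂ :=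
  Matrix.of fun p j =>
    if (p : ℕ) ≤ (j : ℕ) then -(ang lam 1 (lbl j) * ang lam 2 (lbl p)) / ang lam 1 2
    else -(ang lam 1 (lbl p) * ang lam 2 (lbl j)) / ang lam 1 2

/-! Every row of `Q` encodes Schouten's identity as a three-term relation: for any spinor `x`
and label `b`,
`⟨x,b−1⟩/⟨b−1,b⟩ + ⟨b+1,b−1⟩⟨x,b⟩/(⟨b−1,b⟩⟨b,b+1⟩) + ⟨x,b+1⟩/⟨b,b+1⟩ = 0`.
Off the diagonal, the three entries of a column of `Q⁻¹` met by row `b` lie on one side of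
the diagonal, so they are all multiples of `⟨1,·⟩` or all multiples of `⟨2,·⟩`, and the row
sum vanishes. On the diagonal the switch between the two formulas leaves
`(⟨1b⟩⟨2,b+1⟩ − ⟨1,b+1⟩⟨2b⟩)/(⟨12⟩⟨b,b+1⟩)`, which is `1` by Schouten's identity again.
The first and last rows need no separate treatment: extending column `j` of `Q⁻¹` by the
same formulas to the labels `2` and `n + 1 ≡ 1` gives the values `⟨22⟩ = 0` and `⟨11⟩ = 0`. -/

section Spinor

variable {n : ℕ} (lam : ZMod n → Fin 2 → ℂ)

theorem ang_self (a : ZMod n) : ang lam a a = 0 := by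
  simp only [ang]; ring

theorem ang_swap (a b : ZMod n) : ang lam a b = -ang lam b a := by
  simp only [ang]; ring

theorem ang_schouten (x y a b : ZMod n) :
    ang lam x a * ang lam y b - ang lam x b * ang lam y a = ang lam x y * ang lam a b := by
  simp only [ang]; ring

theorem ang_three_term {b : ZMod n} (hA : ang lam (b - 1) b ≠ 0) (hB : ang lam b (b + 1) ≠ 0)
    (x : ZMod n) :
    ang lam x (b - 1) / ang lam (b - 1) b
      + ang lam (b + 1) (b - 1) / (ang lam (b - 1) b * ang lam b (b + 1)) * ang lam x b
      + ang lam x (b + 1) / ang lam b (b + 1) = 0 := by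
  field_simp
  linear_combination -ang_schouten lam x (b + 1) (b - 1) b
    + ang lam x (b - 1) * ang_swap lam b (b + 1)

end Spinor

theorem Fin.sum_ite_val_eq {M : Type*} [AddCommMonoid M] (m c : ℕ) (g : ℕ → M)
    (hc : m ≤ c → g c = 0) : ∑ p : Fin m, (if (p : ℕ) = c then g p else 0) = g c := by
  rw [Fin.sum_univ_eq_sum_range (fun k => if k = c then g k else 0), Finset.sum_ite_eq']
  split_ifs with h
  · rfl
  · exact (hc (by simpa using h)).symm

section Tridiagonal

variable {n : ℕ} (lam : ZMod n → Fin 2 → ℂ)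

theorem Qmat_apply_eq_add (i p : Fin (n - 2)) :
    Qmat lam i p =
      (if p = i then ang lam (lbl i + 1) (lbl i - 1) /
          (ang lam (lbl i - 1) (lbl i) * ang lam (lbl i) (lbl i + 1)) else 0)
        + (if (p : ℕ) = i + 1 then 1 / ang lam (lbl i) (lbl i + 1) else 0)
        + (if (i : ℕ) = p + 1 then 1 / ang lam (lbl p) (lbl p + 1) else 0) := by
  simp only [Qmat, Matrix.of_apply, Fin.ext_iff]
  split_ifs <;> first | omega | simp

theorem lbl_eq_add_one {k : ℕ} {i : Fin (n - 2)} (hk : (i : ℕ) = k + 1) :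
    lbl i = lbl (⟨k, by omega⟩ : Fin (n - 2)) + 1 := by
  simp only [lbl, hk]; push_cast; ring

theorem natCast_add_two_eq_lbl_sub_one (i : Fin (n - 2)) :
    ((i + 2 : ℕ) : ZMod n) = lbl i - 1 := by
  simp only [lbl]; push_cast; ring

theorem natCast_add_three_eq_lbl (i : Fin (n - 2)) : ((i + 3 : ℕ) : ZMod n) = lbl i :=
  rfl

theorem natCast_add_four_eq_lbl_add_one (i : Fin (n - 2)) :
    ((i + 4 : ℕ) : ZMod n) = lbl i + 1 := by
  simp only [lbl]; push_cast; ring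

theorem Qmat_row_sum (f : ℕ → ℂ) (h2 : f 2 = 0) (hn : f (n + 1) = 0) (i : Fin (n - 2)) :
    ∑ p, Qmat lam i p * f (p + 3) =
      f (i + 2) / ang lam (lbl i - 1) (lbl i)
        + ang lam (lbl i + 1) (lbl i - 1) /
            (ang lam (lbl i - 1) (lbl i) * ang lam (lbl i) (lbl i + 1)) * f (i + 3)
        + f (i + 4) / ang lam (lbl i) (lbl i + 1) := by
  simp only [Qmat_apply_eq_add, add_mul, ite_mul, zero_mul, Finset.sum_add_distrib,
    Finset.sum_ite_eq', Finset.mem_univ, if_true]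
  have hright : ∑ p : Fin (n - 2), (if (p : ℕ) = i + 1 then
      1 / ang lam (lbl i) (lbl i + 1) * f (p + 3) else 0) =
        f (i + 4) / ang lam (lbl i) (lbl i + 1) := by
    rw [Fin.sum_ite_val_eq _ _ (fun k => 1 / ang lam (lbl i) (lbl i + 1) * f (k + 3))]
    · ring
    · intro h; rw [show (i : ℕ) + 1 + 3 = n + 1 by omega, hn, mul_zero]
  have hleft : ∑ p : Fin (n - 2), (if (i : ℕ) = p + 1 then
      1 / ang lam (lbl p) (lbl p + 1) * f (p + 3) else 0) =
        f (i + 2) / ang lam (lbl i - 1) (lbl i) := by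
    rcases hi : (i : ℕ) with _ | k
    · simp [h2]
    · have hk : k < n - 2 := by omega
      simp only [add_left_inj, eq_comm (a := k)]
      refine (Fin.sum_ite_val_eq (n - 2) k
        (fun m => 1 / ang lam ((m + 3 : ℕ)) ((m + 3 : ℕ) + 1) * f (m + 3)) (by omega)).trans ?_
      rw [lbl_eq_add_one hi, add_sub_cancel_right]
      exact one_div_mul_eq_div _ _
  rw [hleft, hright]; ring

end Tridiagonal

section Inverse

variable {n : ℕ} (lam : ZMod n → Fin 2 → ℂ)

noncomputable def QinvColumn (j : Fin (n - 2)) (a : ℕ) : ℂ :=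
  if a ≤ j + 3 then -(ang lam 1 (lbl j) * ang lam 2 a) / ang lam 1 2
  else -(ang lam 1 a * ang lam 2 (lbl j)) / ang lam 1 2

theorem Qinv_apply_eq_QinvColumn (p j : Fin (n - 2)) :
    Qinv lam p j = QinvColumn lam j (p + 3) := by
  simp only [Qinv, QinvColumn, Matrix.of_apply, add_le_add_iff_right]
  rfl

theorem QinvColumn_of_le {j : Fin (n - 2)} {a : ℕ} (h : a ≤ j + 3) :
    QinvColumn lam j a = -(ang lam 1 (lbl j) * ang lam 2 a) / ang lam 1 2 :=
  if_pos h

theorem QinvColumn_of_ge {j : Fin (n - 2)} {a : ℕ} (h : j + 3 ≤ a) :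
    QinvColumn lam j a = -(ang lam 1 a * ang lam 2 (lbl j)) / ang lam 1 2 := by
  rcases h.eq_or_lt with rfl | hlt
  · exact if_pos le_rfl
  · exact if_neg hlt.not_ge

theorem QinvColumn_two (j : Fin (n - 2)) : QinvColumn lam j 2 = 0 := by
  rw [QinvColumn_of_le lam (by omega), Nat.cast_ofNat, ang_self, mul_zero, neg_zero, zero_div]

theorem QinvColumn_add_one (j : Fin (n - 2)) : QinvColumn lam j (n + 1) = 0 := by
  rw [QinvColumn_of_ge lam (by omega), Nat.cast_succ, ZMod.natCast_self, zero_add, ang_self,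
    zero_mul, neg_zero, zero_div]

end Inverse

theorem Qmat_mul_Qinv_general {n : ℕ} (lam : ZMod n → Fin 2 → ℂ)
    (h12 : ang lam 1 2 ≠ 0) (hang : ∀ i : ZMod n, ang lam i (i + 1) ≠ 0) :
    ∀ i j : Fin (n - 2),
      ∑ p : Fin (n - 2), Qmat lam i p * Qinv lam p j = if i = j then 1 else 0 := by
  intro i j
  have hA : ang lam (lbl i - 1) (lbl i) ≠ 0 := by simpa using hang (lbl i - 1)
  have hB := hang (lbl i)
  simp only [Qinv_apply_eq_QinvColumn]
  rw [Qmat_row_sum lam _ (QinvColumn_two lam j) (QinvColumn_add_one lam j)]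
  rcases lt_trichotomy i j with hij | rfl | hji
  · rw [if_neg hij.ne, QinvColumn_of_le lam (by omega), QinvColumn_of_le lam (by omega),
      QinvColumn_of_le lam (by omega), natCast_add_two_eq_lbl_sub_one, natCast_add_three_eq_lbl,
      natCast_add_four_eq_lbl_add_one]
    linear_combination (-ang lam 1 (lbl j) / ang lam 1 2) * ang_three_term lam hA hB 2
  · rw [if_pos rfl, QinvColumn_of_le lam (by omega), QinvColumn_of_le lam (by omega),
      QinvColumn_of_ge lam (by omega), natCast_add_two_eq_lbl_sub_one, natCast_add_three_eq_lbl,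
      natCast_add_four_eq_lbl_add_one]
    calc _ = (ang lam 1 (lbl i) * ang lam 2 (lbl i + 1) - ang lam 1 (lbl i + 1) * ang lam 2 (lbl i))
          / (ang lam 1 2 * ang lam (lbl i) (lbl i + 1)) := by
          linear_combination (-ang lam 1 (lbl i) / ang lam 1 2) * ang_three_term lam hA hB 2
      _ = 1 := by rw [ang_schouten, div_self (mul_ne_zero h12 hB)]
  · rw [if_neg hji.ne', QinvColumn_of_ge lam (by omega), QinvColumn_of_ge lam (by omega),
      QinvColumn_of_ge lam (by omega), natCast_add_two_eq_lbl_sub_one, natCast_add_three_eq_lbl,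
      natCast_add_four_eq_lbl_add_one]
    linear_combination (-ang lam 2 (lbl j) / ang lam 1 2) * ang_three_term lam hA hB 1

/-- `Σ_{p̂=3}^{n} Q_{îp̂} Q⁻¹_{p̂ĵ} = δ_{îĵ}`: the matrix `Qinv` is the inverse of `Q`. -/
theorem Qmat_mul_Qinv {n : ℕ} [NeZero n] (hn : 4 ≤ n) (lam : ZMod n → Fin 2 → ℂ)
    (h12 : ang lam 1 2 ≠ 0) (hang : ∀ i : ZMod n, ang lam i (i + 1) ≠ 0) :
    ∀ i j : Fin (n - 2),
      ∑ p : Fin (n - 2), Qmat lam i p * Qinv lam p j = if i = j then 1 else 0 :=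
  Qmat_mul_Qinv_general lam h12 hang
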